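/- For every positive integer n and every real number A, the following identity of linear operators on ℝ[x] holds: Dⁿ∘(δ − A·I) = M∘Dⁿ, where D = d/dx, I is the identity operator, and M is the operator given by M[q] = (x²−1)·q″ + 2(n+1)·x·q′ + (n² + n − A)·q. -/
import Mathlib

open Polynomial Finset

/-- The Legendre differential operator `δ[q] = (x²−1)q″ + 2xq′` as a linear endomorphism. -/
noncomputable def legendreDelta : Module.End ℝ (Polynomial ℝ) :=
  (LinearMap.mulLeft ℝ ((X : Polynomial ℝ) ^ 2 - 1)).comp
      (Polynomial.derivative.comp Polynomial.derivative) +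
    (LinearMap.mulLeft ℝ (2 * X : Polynomial ℝ)).comp Polynomial.derivative

noncomputable def Nop (b c : ℝ) : Module.End ℝ (Polynomial ℝ) :=
  LinearMap.mulLeft ℝ ((X : Polynomial ℝ) ^ 2 - 1) *
      ((Polynomial.derivative : Module.End ℝ (Polynomial ℝ)) * Polynomial.derivative) +
    LinearMap.mulLeft ℝ (Polynomial.C b * X) * (Polynomial.derivative : Module.End ℝ (Polynomial ℝ)) +
    c • (1 : Module.End ℝ (Polynomial ℝ))

lemma Nop_step (b c : ℝ) :
    (Polynomial.derivative : Module.End ℝ (Polynomial ℝ)) * Nop b c =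
      Nop (b + 2) (b + c) * Polynomial.derivative := by
  apply LinearMap.ext
  intro q
  simp only [Nop, Module.End.mul_apply, LinearMap.add_apply, LinearMap.smul_apply,
    Module.End.one_apply, LinearMap.mulLeft_apply, map_add, map_smul, derivative_mul,
    derivative_C, derivative_X, derivative_sub, derivative_one, derivative_X_pow, map_C,
    map_sub, smul_eq_C_mul]
  push_cast
  ring

lemma Nop_pow (A : ℝ) : ∀ m : ℕ,
    (Polynomial.derivative : Module.End ℝ (Polynomial ℝ)) ^ m * Nop 2 (-A) =
      Nop (2 + 2 * m) ((m : ℝ) ^ 2 + m - A) *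
        (Polynomial.derivative : Module.End ℝ (Polynomial ℝ)) ^ m := by
  intro m
  induction m with
  | zero => norm_num
  | succ k ih =>
      have h2 : (2 : ℝ) + 2 * (k + 1 : ℕ) = (2 + 2 * k) + 2 := by push_cast; ring
      have h3 : ((k + 1 : ℕ) : ℝ) ^ 2 + ((k + 1 : ℕ) : ℝ) - A =
          (2 + 2 * k) + ((k : ℝ) ^ 2 + k - A) := by push_cast; ring
      calc (Polynomial.derivative : Module.End ℝ (Polynomial ℝ)) ^ (k + 1) * Nop 2 (-A)
          = Polynomial.derivative * ((Polynomial.derivative : Module.End ℝ (Polynomial ℝ)) ^ k * Nop 2 (-A)) := by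
            rw [pow_succ', mul_assoc]
        _ = Polynomial.derivative * (Nop (2 + 2 * k) ((k : ℝ) ^ 2 + k - A) * (Polynomial.derivative : Module.End ℝ (Polynomial ℝ)) ^ k) := by rw [ih]
        _ = ((Polynomial.derivative : Module.End ℝ (Polynomial ℝ)) * Nop (2 + 2 * k) ((k : ℝ) ^ 2 + k - A)) * (Polynomial.derivative : Module.End ℝ (Polynomial ℝ)) ^ k := by
            rw [mul_assoc]
        _ = Nop ((2 + 2 * k) + 2) ((2 + 2 * k) + ((k : ℝ) ^ 2 + k - A)) * (Polynomial.derivative : Module.End ℝ (Polynomial ℝ)) ^ (k + 1) := by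
            rw [Nop_step, mul_assoc, ← pow_succ']
        _ = _ := by rw [h2, h3]

theorem stmt15 (n : ℕ) (hn : 0 < n) (A : ℝ) :
    (Polynomial.derivative : Module.End ℝ (Polynomial ℝ)) ^ n *
        (legendreDelta - A • (1 : Module.End ℝ (Polynomial ℝ))) =
      ((LinearMap.mulLeft ℝ ((X : Polynomial ℝ) ^ 2 - 1)).comp
            (Polynomial.derivative.comp Polynomial.derivative) +
          (LinearMap.mulLeft ℝ (Polynomial.C (2 * ((n : ℝ) + 1)) * X)).comp
            Polynomial.derivative +
          ((n : ℝ) ^ 2 + n - A) • (1 : Module.End ℝ (Polynomial ℝ))) *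
        (Polynomial.derivative : Module.End ℝ (Polynomial ℝ)) ^ n := by
  have h1 : legendreDelta - A • (1 : Module.End ℝ (Polynomial ℝ)) = Nop 2 (-A) := by
    simp only [legendreDelta, Nop, ← Module.End.mul_eq_comp, map_ofNat, neg_smul,
      sub_eq_add_neg]
    congr 1
    exact (neg_smul A (1 : Module.End ℝ (Polynomial ℝ))).symm
  have h2 : ((LinearMap.mulLeft ℝ ((X : Polynomial ℝ) ^ 2 - 1)).comp
            (Polynomial.derivative.comp Polynomial.derivative) +
          (LinearMap.mulLeft ℝ (Polynomial.C (2 * ((n : ℝ) + 1)) * X)).comp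
            Polynomial.derivative +
          ((n : ℝ) ^ 2 + n - A) • (1 : Module.End ℝ (Polynomial ℝ))) =
        Nop (2 + 2 * n) ((n : ℝ) ^ 2 + n - A) := by
    simp only [Nop, ← Module.End.mul_eq_comp]
    congr 3
    ring
  rw [h1, h2, Nop_pow]
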